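/- Let R be a PID and n ≥ 2. In the quiver with relations (Q, ρ) of the stratification A_n of S^2 (n points P_1,…,P_n on the equator, n equator arcs E_1,…,E_n, two hemispheres H_1, H_2), the Hom-module between I_S and I_T is free of rank 1 exactly in the following cases and zero otherwise: Hom(I_{H_j}, I_{H_j}); Hom(I_{H_j}, I_{E_i}) and Hom(I_{H_j}, I_{P_i}) for all i, j; Hom(I_{E_i}, I_{E_i}); Hom(I_{E_i}, I_{P_i}); Hom(I_{E_i}, I_{P_{i−1}}) (indices mod n); Hom(I_{P_i}, I_{P_i}). -/

import Mathlib

open CategoryTheory CategoryTheory.Limits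

/-- The vertices of the quiver of the stratification `Aₙ` of the 2-sphere: two hemispheres
`H j` (`j : Fin 2`), `n` equator arcs `E i` and `n` points `P i` (`i : Fin n`). -/
inductive VA (n : ℕ) : Type
  | H (j : Fin 2) | E (i : Fin n) | P (i : Fin n)
  deriving DecidableEq

namespace VA

variable {n : ℕ} [NeZero n]

/-- The closure relation of `Aₙ`: `P i` lies in the closure of the arcs `E i` and
`E (i+1)` (indices mod `n`) and of both hemispheres; each arc lies in the closure of both
hemispheres. -/
def rel : VA n → VA n → Prop
  | H j, H j' => j = j'
  | E i, E i' => i = i'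
  | P i, P i' => i = i'
  | E _, H _ => True
  | P _, H _ => True
  | P i, E i' => i' = i ∨ i' = i + 1
  | _, _ => False

/-- Identifying all parallel paths, the category of representations of the quiver with
relations of `Aₙ` is the category of functors on this preorder. -/
instance : Preorder (VA n) where
  le := rel
  le_refl a := by cases a <;> simp [rel]
  le_trans a b c hab hbc := by
    cases a <;> cases b <;> cases c <;> simp_all [rel]

lemma P_le_E_self (i : Fin n) : (P i : VA n) ≤ E i := Or.inl rfl
lemma P_le_E_next (i : Fin n) : (P i : VA n) ≤ E (i + 1) := Or.inr rfl
lemma P_le_H (i : Fin n) (j : Fin 2) : (P i : VA n) ≤ H j := trivial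
lemma E_le_H (i : Fin n) (j : Fin 2) : (E i : VA n) ≤ H j := trivial

end VA

open VA

variable (R : Type) [CommRing R] (n : ℕ) [NeZero n]

/-- The category of representations of the quiver with relations of `Aₙ`. -/
abbrev RepA := VA n ⥤ ModuleCat.{0} R

/-- The representation `I_v`: stalk `R` at every vertex `x ≤ v` (with identity arrows
among those) and `0` elsewhere; it corresponds to the extension by zero of the constant
sheaf on the closure of the stratum `v`. -/
def IRep (v : VA n) : RepA R n where
  obj x := ModuleCat.of R (PLift (x ≤ v) → R)
  map {x y} f := ModuleCat.ofHom
    { toFun := fun g h => g ⟨(leOfHom f).trans h.down⟩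
      map_add' := fun _ _ => rfl
      map_smul' := fun _ _ => rfl }

/-- The constant representation `C`. -/
def CRep : RepA R n := (Functor.const (VA n)).obj (ModuleCat.of R R)

/-- The canonical generator of `Hom(I_v, I_w)` for `w ≤ v`. -/
def canMor {v w : VA n} (h : w ≤ v) : IRep R n v ⟶ IRep R n w where
  app x := ModuleCat.ofHom
    { toFun := fun g hw => g ⟨hw.down.trans h⟩
      map_add' := fun _ _ => rfl
      map_smul' := fun _ _ => rfl }

/-- The canonical morphism `C ⟶ I_v`. -/
def unitMor (v : VA n) : CRep R n ⟶ IRep R n v where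
  app x := ModuleCat.ofHom
    { toFun := fun r _ => r
      map_add' := fun _ _ => rfl
      map_smul' := fun _ _ => rfl }


/-!
By naturality, a morphism `I_v ⟶ I_w` is determined by its component at `w`, an `R`-linear
map from the stalk of `I_v` at `w` to `R`. That stalk is `0` unless `w ≤ v`, and `R` when
`w ≤ v`, so `Hom(I_v, I_w)` is `0` or free of rank one according as `w ≤ v` fails or holds;
the pairs listed in the theorem are exactly those with `w ≤ v` in the closure order.
-/

section HomIRep

variable {R n}

lemma IRep.hom_app_apply {v w : VA n} (η : IRep R n v ⟶ IRep R n w) (x : VA n)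
    (g : (IRep R n v).obj x) (hx : PLift (x ≤ w)) :
    η.app x g hx = η.app w ((IRep R n v).map (homOfLE hx.down) g) ⟨le_refl w⟩ := by
  have h := congrArg (fun f : (IRep R n v).obj x ⟶ (IRep R n w).obj w => f g ⟨le_refl w⟩)
    (η.naturality (homOfLE hx.down))
  simp only [ConcreteCategory.comp_apply] at h
  exact h.symm

lemma IRep.map_apply_eq_smul_one {v w x : VA n} (hxw : x ≤ w) (hwv : w ≤ v)
    (g : (IRep R n v).obj x) :
    (IRep R n v).map (homOfLE hxw) g = g ⟨hxw.trans hwv⟩ • fun _ => (1 : R) := by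
  funext h
  exact (mul_one _).symm

lemma IRep.hom_app_apply_of_le {v w : VA n} (hwv : w ≤ v) (η : IRep R n v ⟶ IRep R n w)
    (x : VA n) (g : (IRep R n v).obj x) (hx : PLift (x ≤ w)) :
    η.app x g hx = g ⟨hx.down.trans hwv⟩ * η.app w (fun _ => 1) ⟨le_refl w⟩ := by
  rw [IRep.hom_app_apply, IRep.map_apply_eq_smul_one hx.down hwv]
  exact congrFun (map_smul (η.app w).hom _ (fun _ => (1 : R))) _

lemma IRep.hom_eq_zero_of_not_le {v w : VA n} (hwv : ¬ w ≤ v) (η : IRep R n v ⟶ IRep R n w) :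
    η = 0 := by
  ext x g
  funext hx
  have hres : (IRep R n v).map (homOfLE hx.down) g = 0 := funext fun h => absurd h.down hwv
  rw [IRep.hom_app_apply, hres, map_zero]
  rfl

lemma IRep.subsingleton_hom_of_not_le {v w : VA n} (hwv : ¬ w ≤ v) :
    Subsingleton (IRep R n v ⟶ IRep R n w) :=
  ⟨fun η η' => (hom_eq_zero_of_not_le hwv η).trans (hom_eq_zero_of_not_le hwv η').symm⟩

noncomputable def IRep.homEquivOfLE {v w : VA n} (hwv : w ≤ v) :
    (IRep R n v ⟶ IRep R n w) ≃ₗ[R] R where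
  toFun η := η.app w (fun _ => 1) ⟨le_refl w⟩
  map_add' _ _ := rfl
  map_smul' _ _ := rfl
  invFun r := r • canMor R n hwv
  left_inv η := by
    ext x g
    funext hx
    rw [IRep.hom_app_apply_of_le hwv η x g hx]
    exact mul_comm _ _
  right_inv r := mul_one r

end HomIRep

lemma VA.closure_cases_iff_le {n : ℕ} [NeZero n] {v w : VA n} :
    ((∃ j, v = H j ∧ w = H j) ∨
        (∃ i j, v = H j ∧ w = E i) ∨
        (∃ i j, v = H j ∧ w = P i) ∨
        (∃ i, v = E i ∧ w = E i) ∨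
        (∃ i, v = E i ∧ w = P i) ∨
        (∃ i, v = E i ∧ w = P (i - 1)) ∨
        (∃ i, v = P i ∧ w = P i)) ↔ w ≤ v := by
  change _ ↔ VA.rel w v
  cases v <;> cases w <;> simp_all [VA.rel]
  constructor <;> rintro (rfl | rfl) <;> simp

theorem formality_spheres_stmt15_general (R : Type) [CommRing R] (n : ℕ) [NeZero n] :
    ∀ v w : VA n,
      (((∃ j, v = H j ∧ w = H j) ∨
        (∃ i j, v = H j ∧ w = E i) ∨
        (∃ i j, v = H j ∧ w = P i) ∨
        (∃ i, v = E i ∧ w = E i) ∨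
        (∃ i, v = E i ∧ w = P i) ∨
        (∃ i, v = E i ∧ w = P (i - 1)) ∨
        (∃ i, v = P i ∧ w = P i)) →
        Nonempty ((IRep R n v ⟶ IRep R n w) ≃ₗ[R] R)) ∧
      ((¬ ((∃ j, v = H j ∧ w = H j) ∨
        (∃ i j, v = H j ∧ w = E i) ∨
        (∃ i j, v = H j ∧ w = P i) ∨
        (∃ i, v = E i ∧ w = E i) ∨
        (∃ i, v = E i ∧ w = P i) ∨
        (∃ i, v = E i ∧ w = P (i - 1)) ∨
        (∃ i, v = P i ∧ w = P i))) →
        Subsingleton (IRep R n v ⟶ IRep R n w)) := by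
  intro v w
  rw [VA.closure_cases_iff_le]
  exact ⟨fun hwv => ⟨IRep.homEquivOfLE hwv⟩, IRep.subsingleton_hom_of_not_le⟩

/-- Let `R` be a PID and `n ≥ 2`.  In the quiver with relations of the
stratification `Aₙ` of `S²`, the `R`-module `Hom(I_S, I_T)` is free of rank `1` exactly in
the cases `Hom(I_{H_j}, I_{H_j})`, `Hom(I_{H_j}, I_{E_i})`, `Hom(I_{H_j}, I_{P_i})` (all
`i, j`), `Hom(I_{E_i}, I_{E_i})`, `Hom(I_{E_i}, I_{P_i})`, `Hom(I_{E_i}, I_{P_{i−1}})`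
(indices mod `n`), and `Hom(I_{P_i}, I_{P_i})`, and vanishes otherwise. -/
theorem formality_spheres_stmt15 (R : Type) [CommRing R] [IsDomain R]
    [IsPrincipalIdealRing R] (n : ℕ) [NeZero n] (hn : 2 ≤ n) :
    ∀ v w : VA n,
      (((∃ j, v = H j ∧ w = H j) ∨
        (∃ i j, v = H j ∧ w = E i) ∨
        (∃ i j, v = H j ∧ w = P i) ∨
        (∃ i, v = E i ∧ w = E i) ∨
        (∃ i, v = E i ∧ w = P i) ∨
        (∃ i, v = E i ∧ w = P (i - 1)) ∨
        (∃ i, v = P i ∧ w = P i)) →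
        Nonempty ((IRep R n v ⟶ IRep R n w) ≃ₗ[R] R)) ∧
      ((¬ ((∃ j, v = H j ∧ w = H j) ∨
        (∃ i j, v = H j ∧ w = E i) ∨
        (∃ i j, v = H j ∧ w = P i) ∨
        (∃ i, v = E i ∧ w = E i) ∨
        (∃ i, v = E i ∧ w = P i) ∨
        (∃ i, v = E i ∧ w = P (i - 1)) ∨
        (∃ i, v = P i ∧ w = P i))) →
        Subsingleton (IRep R n v ⟶ IRep R n w)) :=
  formality_spheres_stmt15_general R n
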